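/- arXiv:1904.07675 — 2 statements merged into one kernel-verified Lean document; each statement's English description precedes it below -/
import Mathlib

section
/- Let q be a real number with 0 < q < 1/2 and p = 1 − q, and let C_n = (2n)!/(n!·(n+1)!) denote the n-th Catalan number. Then the series ∑_{n=0}^∞ n·p·(pq)^n·C_n converges and equals q/(p − q). -/
open scoped BigOperators

/-- The `n`-th Catalan number `C_n = (2n)! / (n! * (n+1)!)`, as a real number. -/
noncomputable def catalanC (n : ℕ) : ℝ :=
  (Nat.factorial (2 * n) : ℝ) / ((Nat.factorial n : ℝ) * (Nat.factorial (n + 1) : ℝ))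

/-!
Put `x = pq < 1/4`, `C = ∑ C_n xⁿ` and `D = ∑ n C_n xⁿ`. The recurrence
`C_{n+1} = ∑_{i+j=n} C_i C_j` gives `C = 1 + x C²`, i.e. `(pC - 1)(qC - 1) = 0`, and the partial
sums `∑_{n<N} C_n / 4ⁿ = 2 - 2 binom(2N, N) / 4ᴺ` show `C ≤ 2 < 1/q`, so `C = 1/p`.
Multiplying the recurrence by `n + 1 = i + j + 1` and symmetrising in `i, j` gives
`(n + 1) C_{n+1} = ∑_{i+j=n} (2i + 1) C_i C_j`, i.e. `D = x (2D + C) C`, which at `C = 1/p`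
solves to `p D = q / (p - q)`.
-/

open Finset

theorem succ_mul_catalan_eq_centralBinom_real (n : ℕ) :
    ((n : ℝ) + 1) * catalan n = n.centralBinom := by
  exact_mod_cast succ_mul_catalan_eq_centralBinom n

theorem catalanC_eq_catalan (n : ℕ) : catalanC n = catalan n := by
  rw [catalanC, eq_comm, ← mul_right_inj' (by positivity : ((n : ℝ) + 1) ≠ 0),
    succ_mul_catalan_eq_centralBinom_real, Nat.centralBinom_eq_two_mul_choose,
    Nat.cast_choose ℝ (by omega : n ≤ 2 * n), show 2 * n - n = n by omega, Nat.factorial_succ,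
    Nat.cast_mul]
  field_simp
  push_cast
  ring

theorem catalan_le_four_pow (n : ℕ) : (catalan n : ℝ) ≤ 4 ^ n := by
  have h : catalan n ≤ 4 ^ n :=
    calc catalan n ≤ (n + 1) * catalan n := Nat.le_mul_of_pos_left _ n.succ_pos
      _ = n.centralBinom := succ_mul_catalan_eq_centralBinom n
      _ ≤ 4 ^ n := Nat.centralBinom_le_four_pow n
  exact_mod_cast h

theorem sum_range_catalan_div_four_pow (N : ℕ) :
    ∑ n ∈ range N, (catalan n : ℝ) / 4 ^ n = 2 - 2 * N.centralBinom / 4 ^ N := by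
  induction N with
  | zero => simp
  | succ N ih =>
    have hcb : ((N : ℝ) + 1) * (N + 1).centralBinom = 2 * (2 * N + 1) * N.centralBinom := by
      exact_mod_cast Nat.succ_mul_centralBinom_succ N
    rw [sum_range_succ, ih, pow_succ]
    field_simp
    refine mul_left_cancel₀ (by positivity : ((N : ℝ) + 1) ≠ 0) ?_
    linear_combination 4 * succ_mul_catalan_eq_centralBinom_real N + 2 * hcb

theorem sum_antidiagonal_two_mul_add_one_mul_catalan (n : ℕ) :
    ∑ ij ∈ antidiagonal n, (2 * ij.1 + 1) * catalan ij.1 * catalan ij.2 =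
      (n + 1) * catalan (n + 1) := by
  have hswap : ∑ ij ∈ antidiagonal n, ij.2 * catalan ij.1 * catalan ij.2 =
      ∑ ij ∈ antidiagonal n, ij.1 * catalan ij.1 * catalan ij.2 := by
    rw [← Nat.sum_antidiagonal_swap]
    exact sum_congr rfl fun ij _ => by rw [Prod.fst_swap, Prod.snd_swap, mul_right_comm]
  have hsplit : ∀ ij ∈ antidiagonal n, (n + 1) * (catalan ij.1 * catalan ij.2) =
      ij.1 * catalan ij.1 * catalan ij.2 + ij.2 * catalan ij.1 * catalan ij.2 +
        catalan ij.1 * catalan ij.2 := by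
    intro ij hij
    rw [← mem_antidiagonal.mp hij]
    ring
  rw [catalan_succ', mul_sum, sum_congr rfl hsplit, sum_add_distrib, sum_add_distrib, hswap,
    ← sum_add_distrib, ← sum_add_distrib]
  exact sum_congr rfl fun ij _ => by ring

theorem summable_pow_mul_catalan_mul_pow (k : ℕ) {x : ℝ} (hx : |x| < 1 / 4) :
    Summable fun n : ℕ => (n : ℝ) ^ k * catalan n * x ^ n := by
  have h4x : ‖4 * |x|‖ < 1 := by
    rw [Real.norm_of_nonneg (by positivity)]
    linarith
  refine .of_norm_bounded (summable_pow_mul_geometric_of_norm_lt_one k h4x) fun n => ?_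
  rw [norm_mul, norm_mul, norm_pow, norm_pow, Real.norm_natCast, Real.norm_natCast,
    Real.norm_eq_abs, mul_pow, mul_assoc]
  gcongr
  exact catalan_le_four_pow n

theorem tsum_catalan_mul_pow_le_two {x : ℝ} (hx0 : 0 ≤ x) (hx : x ≤ 1 / 4) :
    ∑' n, (catalan n : ℝ) * x ^ n ≤ 2 := by
  refine Real.tsum_le_of_sum_range_le (fun n => by positivity) fun N => ?_
  calc ∑ n ∈ range N, (catalan n : ℝ) * x ^ n
      ≤ ∑ n ∈ range N, (catalan n : ℝ) / 4 ^ n := by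
        gcongr with n
        rw [div_eq_mul_inv, ← inv_pow, ← one_div]
        gcongr
    _ ≤ 2 := by
        rw [sum_range_catalan_div_four_pow]
        linarith [show (0 : ℝ) ≤ 2 * N.centralBinom / 4 ^ N by positivity]

theorem tsum_mul_pow_mul_tsum_mul_pow {a b : ℕ → ℝ} {x : ℝ}
    (ha : Summable fun n => a n * x ^ n) (hb : Summable fun n => b n * x ^ n) :
    (∑' n, a n * x ^ n) * (∑' n, b n * x ^ n) =
      ∑' n, (∑ ij ∈ antidiagonal n, a ij.1 * b ij.2) * x ^ n := by
  rw [tsum_mul_tsum_eq_tsum_sum_antidiagonal_of_summable_norm ha.norm hb.norm]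
  refine tsum_congr fun n => ?_
  rw [sum_mul]
  refine sum_congr rfl fun ij hij => ?_
  rw [← mem_antidiagonal.mp hij, pow_add]
  ring

theorem tsum_catalan_mul_pow_eq {x : ℝ} (hx : |x| < 1 / 4) :
    ∑' n, (catalan n : ℝ) * x ^ n = 1 + x * (∑' n, (catalan n : ℝ) * x ^ n) ^ 2 := by
  have hC : Summable fun n => (catalan n : ℝ) * x ^ n := by
    simpa using summable_pow_mul_catalan_mul_pow 0 hx
  rw [sq, tsum_mul_pow_mul_tsum_mul_pow hC hC, ← tsum_mul_left, hC.tsum_eq_zero_add]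
  simp only [catalan_succ', catalan_zero, Nat.cast_one, pow_zero, mul_one, Nat.cast_sum,
    Nat.cast_mul, pow_succ]
  exact congrArg _ (tsum_congr fun n => by ring)

theorem tsum_natCast_mul_catalan_mul_pow_eq {x : ℝ} (hx : |x| < 1 / 4) :
    ∑' n : ℕ, (n : ℝ) * catalan n * x ^ n =
      x * ((2 * ∑' n : ℕ, (n : ℝ) * catalan n * x ^ n + ∑' n, (catalan n : ℝ) * x ^ n) *
        ∑' n, (catalan n : ℝ) * x ^ n) := by
  have hC : Summable fun n => (catalan n : ℝ) * x ^ n := by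
    simpa using summable_pow_mul_catalan_mul_pow 0 hx
  have hD : Summable fun n : ℕ => (n : ℝ) * catalan n * x ^ n := by
    simpa using summable_pow_mul_catalan_mul_pow 1 hx
  have hA : Summable fun n : ℕ => (2 * (n : ℝ) + 1) * catalan n * x ^ n :=
    ((hD.mul_left 2).add hC).congr fun n => by ring
  have hA_tsum : ∑' n : ℕ, (2 * (n : ℝ) + 1) * catalan n * x ^ n =
      2 * ∑' n : ℕ, (n : ℝ) * catalan n * x ^ n + ∑' n, (catalan n : ℝ) * x ^ n := by
    rw [← tsum_mul_left, ← (hD.mul_left 2).tsum_add hC]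
    exact tsum_congr fun n => by ring
  rw [← hA_tsum, tsum_mul_pow_mul_tsum_mul_pow hA hC, ← tsum_mul_left, hD.tsum_eq_zero_add,
    Nat.cast_zero, zero_mul, zero_mul, zero_add]
  refine tsum_congr fun n => ?_
  have hcoeff : ∑ ij ∈ antidiagonal n, (2 * (ij.1 : ℝ) + 1) * catalan ij.1 * catalan ij.2 =
      (n + 1) * catalan (n + 1) := by
    exact_mod_cast sum_antidiagonal_two_mul_add_one_mul_catalan n
  rw [hcoeff, pow_succ, Nat.cast_succ]
  ring

theorem mul_mem_Ico_of_eq_one_sub {p q : ℝ} (hq0 : 0 ≤ q) (hq : q < 1 / 2) (hp : p = 1 - q) :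
    p * q ∈ Set.Ico 0 (1 / 4) := by
  subst hp
  constructor <;> nlinarith

theorem mul_tsum_catalan_mul_pow_eq_one {p q : ℝ} (hq0 : 0 ≤ q) (hq : q < 1 / 2)
    (hp : p = 1 - q) : p * ∑' n, (catalan n : ℝ) * (p * q) ^ n = 1 := by
  obtain ⟨hx0, hx⟩ := mul_mem_Ico_of_eq_one_sub hq0 hq hp
  set C := ∑' n, (catalan n : ℝ) * (p * q) ^ n
  have hroots : (p * C - 1) * (q * C - 1) = 0 := by
    linear_combination -tsum_catalan_mul_pow_eq (abs_lt.2 ⟨by linarith, hx⟩) - C * hp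
  have hqC : q * C < 1 := by nlinarith [tsum_catalan_mul_pow_le_two hx0 hx.le]
  rcases mul_eq_zero.1 hroots with h | h <;> linarith

/-- For `0 < q < 1/2` and `p = 1 - q`, the series `∑ n p (pq)^n C_n` converges and equals
`q / (p - q)`. -/
theorem catalan_weighted_sum (q p : ℝ) (hq0 : 0 < q) (hq : q < 1 / 2) (hp : p = 1 - q) :
    HasSum (fun n : ℕ => (n : ℝ) * p * (p * q) ^ n * catalanC n) (q / (p - q)) := by
  obtain ⟨hx0, hx⟩ := mul_mem_Ico_of_eq_one_sub hq0.le hq hp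
  have hx_abs : |p * q| < 1 / 4 := abs_lt.2 ⟨by linarith, hx⟩
  have hpC := mul_tsum_catalan_mul_pow_eq_one hq0.le hq hp
  have hD := tsum_natCast_mul_catalan_mul_pow_eq hx_abs
  set C := ∑' n, (catalan n : ℝ) * (p * q) ^ n
  set D := ∑' n : ℕ, (n : ℝ) * catalan n * (p * q) ^ n
  have hpD : p * D = q / (p - q) := by
    rw [eq_div_iff (by linarith)]
    linear_combination p * hD + (2 * q * p * D + q * (p * C + 1)) * hpC + p * D * hp
  have hsum := (summable_pow_mul_catalan_mul_pow 1 hx_abs).hasSum.mul_left p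
  simp only [pow_one] at hsum
  rw [← hpD]
  refine hsum.congr_fun fun n => ?_
  rw [catalanC_eq_catalan]
  ring
end

section
/- With the Bernoulli-sequence model, let τ = inf{k ≥ 1 : W_k = −1} and let L = (τ+1)/2 be the Equal-Fork Stubborn Mining cycle length. Then τ is almost surely finite and E[L] = p/(p − q). -/
open MeasureTheory ENNReal
open scoped BigOperators Classical

/-- Blocks are labelled by `Bool`: `true` = `S` (selfish/attacker block),
`false` = `H` (honest block). The walk `W k = #{i < k : X_i = S} - #{i < k : X_i = H}`. -/
def walkW (ω : ℕ → Bool) (k : ℕ) : ℤ :=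
  (((Finset.range k).filter fun i => ω i = true).card : ℤ) -
    (((Finset.range k).filter fun i => ω i = false).card : ℤ)

/-- The first hitting time `τ = inf {k ≥ 1 : W_k = -1}` of level `-1` by the walk,
with `τ = ∞` if the walk never reaches `-1`. -/
noncomputable def tauEF (ω : ℕ → Bool) : ℕ∞ :=
  if _h : {k : ℕ | 1 ≤ k ∧ walkW ω k = -1}.Nonempty then
    ((sInf {k : ℕ | 1 ≤ k ∧ walkW ω k = -1} : ℕ) : ℕ∞)
  else ⊤

lemma walkW_zero (ω : ℕ → Bool) : walkW ω 0 = 0 := by simp [walkW]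

lemma walkW_succ (ω : ℕ → Bool) (k : ℕ) :
    walkW ω (k + 1) = walkW ω k + (if ω k then 1 else -1) := by
  unfold walkW
  rw [Finset.range_add_one, Finset.filter_insert, Finset.filter_insert]
  by_cases h : ω k
  · rw [if_pos (by simp [h]), if_neg (by simp [h]),
      Finset.card_insert_of_notMem (by simp), if_pos h]
    push_cast; ring
  · rw [if_neg (by simp [h]), if_pos (by simp [h]),
      Finset.card_insert_of_notMem (by simp), if_neg h]
    push_cast; ring

lemma walkW_parity (ω : ℕ → Bool) (k : ℕ) : Even (walkW ω k + k) := by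
  induction k with
  | zero => simp [walkW_zero]
  | succ n ih =>
    rw [walkW_succ]
    rcases ih with ⟨c, hc⟩
    by_cases h : ω n
    · exact ⟨c + 1, by rw [if_pos h]; push_cast; omega⟩
    · exact ⟨c, by rw [if_neg h]; push_cast; omega⟩

lemma walkW_congr {ω ω' : ℕ → Bool} {k : ℕ} (h : ∀ i < k, ω i = ω' i) :
    walkW ω k = walkW ω' k := by
  unfold walkW
  have e1 : Finset.filter (fun i => ω i = true) (Finset.range k)
      = Finset.filter (fun i => ω' i = true) (Finset.range k) :=
    Finset.filter_congr (fun i hi => by rw [h i (Finset.mem_range.mp hi)])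
  have e2 : Finset.filter (fun i => ω i = false) (Finset.range k)
      = Finset.filter (fun i => ω' i = false) (Finset.range k) :=
    Finset.filter_congr (fun i hi => by rw [h i (Finset.mem_range.mp hi)])
  rw [e1, e2]

lemma walkW_nonneg {ω : ℕ → Bool} {k : ℕ} (h : ∀ j ≤ k, walkW ω j ≠ -1) :
    0 ≤ walkW ω k := by
  induction k with
  | zero => simp [walkW_zero]
  | succ n ih =>
    have h1 : 0 ≤ walkW ω n := ih fun j hj => h j (by omega)
    have h2 := h (n + 1) le_rfl
    rw [walkW_succ] at h2 ⊢
    by_cases hb : ω n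
    · rw [if_pos hb] at *; omega
    · rw [if_neg hb] at *; omega

lemma walkW_le (ω : ℕ → Bool) (k : ℕ) : walkW ω k ≤ k := by
  induction k with
  | zero => simp [walkW_zero]
  | succ n ih =>
    rw [walkW_succ]
    by_cases hb : ω n
    · rw [if_pos hb]; push_cast; omega
    · rw [if_neg hb]; push_cast; omega

lemma lt_tauEF_iff {ω : ℕ → Bool} {m : ℕ} :
    (m : ℕ∞) < tauEF ω ↔ ∀ k ≤ m, walkW ω k ≠ -1 := by
  unfold tauEF
  split_ifs with h
  · rw [Nat.cast_lt]
    constructor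
    · intro hlt k hk hw
      rcases Nat.eq_zero_or_pos k with rfl | hk1
      · rw [walkW_zero] at hw; exact absurd hw (by norm_num)
      · have : sInf {k : ℕ | 1 ≤ k ∧ walkW ω k = -1} ≤ k :=
          Nat.sInf_le (Set.mem_setOf.mpr ⟨hk1, hw⟩)
        omega
    · intro hall
      by_contra hle
      push_neg at hle
      obtain ⟨h1, hw⟩ := Nat.sInf_mem h
      exact hall _ (le_trans hle (le_refl _)) hw
  · refine iff_of_true (WithTop.coe_lt_top m) ?_
    intro k hk hw
    rcases Nat.eq_zero_or_pos k with rfl | hk1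
    · rw [walkW_zero] at hw; exact absurd hw (by norm_num)
    · exact h ⟨k, hk1, hw⟩

lemma tauEF_eq_coe {ω : ℕ → Bool} {n : ℕ} (h : tauEF ω = (n : ℕ∞)) :
    1 ≤ n ∧ walkW ω n = -1 := by
  unfold tauEF at h
  split_ifs at h with hne
  · rw [Nat.cast_inj] at h
    rw [← h]; exact Nat.sInf_mem hne
  · exact absurd h (by simp)

noncomputable section

def wt (q p : ℝ) {m : ℕ} (w : Fin m → Bool) : ℝ := ∏ i, (if w i then q else p)

def extW {m : ℕ} (w : Fin m → Bool) : ℕ → Bool :=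
  fun i => if h : i < m then w ⟨i, h⟩ else false

lemma extW_eq {m : ℕ} (w : Fin m → Bool) (i : ℕ) (h : i < m) :
    extW w i = w ⟨i, h⟩ := dif_pos h

def aliveSet (m : ℕ) : Finset (Fin m → Bool) :=
  Finset.univ.filter fun w => ∀ k ≤ m, walkW (extW w) k ≠ -1

lemma mem_aliveSet {m : ℕ} {w : Fin m → Bool} :
    w ∈ aliveSet m ↔ ∀ k ≤ m, walkW (extW w) k ≠ -1 := by
  simp [aliveSet]

def AA (q p : ℝ) (m : ℕ) : ℝ := ∑ w ∈ aliveSet m, wt q p w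

def CC (q p : ℝ) (m : ℕ) : ℝ :=
  ∑ w ∈ aliveSet m, wt q p w * ((walkW (extW w) m : ℤ) : ℝ)

def DD (q p : ℝ) (m : ℕ) : ℝ :=
  ∑ w ∈ (aliveSet m).filter (fun w => walkW (extW w) m = 0), wt q p w

-- snoc lemmas
lemma extW_snoc_lt {m : ℕ} (w : Fin m → Bool) (b : Bool) (i : ℕ) (h : i < m) :
    extW (Fin.snoc w b : Fin (m+1) → Bool) i = extW w i := by
  rw [extW_eq _ i (Nat.lt_succ_of_lt h), extW_eq _ i h]
  have : (⟨i, Nat.lt_succ_of_lt h⟩ : Fin (m+1)) = Fin.castSucc ⟨i, h⟩ := rfl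
  rw [this, Fin.snoc_castSucc]

lemma extW_snoc_last {m : ℕ} (w : Fin m → Bool) (b : Bool) :
    extW (Fin.snoc w b : Fin (m+1) → Bool) m = b := by
  rw [extW_eq _ m (Nat.lt_succ_self m)]
  have : (⟨m, Nat.lt_succ_self m⟩ : Fin (m+1)) = Fin.last m := rfl
  rw [this, Fin.snoc_last]

lemma walk_snoc_le {m : ℕ} (w : Fin m → Bool) (b : Bool) {k : ℕ} (hk : k ≤ m) :
    walkW (extW (Fin.snoc w b : Fin (m+1) → Bool)) k = walkW (extW w) k :=
  walkW_congr fun i hi => extW_snoc_lt w b i (lt_of_lt_of_le hi hk)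

lemma walk_snoc_succ {m : ℕ} (w : Fin m → Bool) (b : Bool) :
    walkW (extW (Fin.snoc w b : Fin (m+1) → Bool)) (m+1)
      = walkW (extW w) m + (if b then 1 else -1) := by
  rw [walkW_succ, walk_snoc_le w b le_rfl, extW_snoc_last]

lemma wt_snoc (q p : ℝ) {m : ℕ} (w : Fin m → Bool) (b : Bool) :
    wt q p (Fin.snoc w b : Fin (m+1) → Bool) = wt q p w * (if b then q else p) := by
  unfold wt
  rw [Fin.prod_univ_castSucc]
  simp [Fin.snoc_castSucc, Fin.snoc_last]

lemma alive_snoc {m : ℕ} (w : Fin m → Bool) (b : Bool) :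
    (Fin.snoc w b : Fin (m+1) → Bool) ∈ aliveSet (m+1)
      ↔ w ∈ aliveSet m ∧ walkW (extW w) m + (if b then 1 else -1) ≠ -1 := by
  rw [mem_aliveSet, mem_aliveSet]
  constructor
  · intro h
    refine ⟨fun k hk => by rw [← walk_snoc_le w b hk]; exact h k (by omega), ?_⟩
    rw [← walk_snoc_succ w b]; exact h (m+1) le_rfl
  · rintro ⟨h1, h2⟩ k hk
    rcases Nat.lt_or_ge k (m+1) with h | h
    · rw [walk_snoc_le w b (Nat.lt_succ_iff.mp h)]
      exact h1 k (Nat.lt_succ_iff.mp h)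
    · have : k = m + 1 := le_antisymm hk h
      subst this
      rw [walk_snoc_succ]; exact h2
  
lemma sum_succ_fn {m : ℕ} (f : (Fin (m+1) → Bool) → ℝ) :
    ∑ w' : Fin (m+1) → Bool, f w' = ∑ w : Fin m → Bool, ∑ b : Bool, f (Fin.snoc w b) := by
  rw [← Equiv.sum_comp (Fin.snocEquiv (fun _ => Bool)) f, Fintype.sum_prod_type]
  exact Finset.sum_comm

end

noncomputable section
-- EE: alive words with nonzero walk
def EE (q p : ℝ) (m : ℕ) : ℝ :=
  ∑ w ∈ (aliveSet m).filter (fun w => ¬ walkW (extW w) m = 0), wt q p w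

lemma DD_add_EE (q p : ℝ) (m : ℕ) : DD q p m + EE q p m = AA q p m :=
  Finset.sum_filter_add_sum_filter_not _ _ _

lemma CC_eq_CE (q p : ℝ) (m : ℕ) :
    CC q p m = ∑ w ∈ (aliveSet m).filter (fun w => ¬ walkW (extW w) m = 0),
      wt q p w * ((walkW (extW w) m : ℤ) : ℝ) := by
  rw [CC, ← Finset.sum_filter_add_sum_filter_not (aliveSet m)
    (fun w => ¬ walkW (extW w) m = 0)]
  have : ∑ w ∈ (aliveSet m).filter (fun w => ¬¬ walkW (extW w) m = 0),
      wt q p w * ((walkW (extW w) m : ℤ) : ℝ) = 0 := by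
    apply Finset.sum_eq_zero
    intro w hw
    have := (Finset.mem_filter.mp hw).2
    have h0 : walkW (extW w) m = 0 := by tauto
    rw [h0]; simp
  rw [this, add_zero]

lemma sum_alive_eq {m : ℕ} (f : (Fin m → Bool) → ℝ) :
    ∑ w ∈ aliveSet m, f w
      = ∑ w : Fin m → Bool, if w ∈ aliveSet m then f w else 0 := by
  rw [Finset.sum_ite_mem, Finset.univ_inter]

lemma sum_alive_filter_eq {m : ℕ} (P : (Fin m → Bool) → Prop) [DecidablePred P]
    (f : (Fin m → Bool) → ℝ) :
    ∑ w ∈ (aliveSet m).filter (fun w => P w), f w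
      = ∑ w : Fin m → Bool, if w ∈ aliveSet m ∧ P w then f w else 0 := by
  rw [Finset.sum_filter, sum_alive_eq]
  apply Finset.sum_congr rfl
  intro w _
  by_cases hw : w ∈ aliveSet m <;> by_cases hP : P w <;> simp [hw, hP]

lemma point_R1 (q p : ℝ) {m : ℕ} (w : Fin m → Bool) :
    (∑ b : Bool, if Fin.snoc w b ∈ aliveSet (m+1) then wt q p (Fin.snoc w b) else 0)
    = (if w ∈ aliveSet m then q * wt q p w else 0)
      + (if w ∈ aliveSet m ∧ ¬ walkW (extW w) m = 0 then p * wt q p w else 0) := by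
  rw [Fintype.sum_bool]
  by_cases hw : w ∈ aliveSet m
  · have hW : 0 ≤ walkW (extW w) m :=
      walkW_nonneg (fun j hj => mem_aliveSet.mp hw j hj)
    have ht : Fin.snoc w true ∈ aliveSet (m+1) :=
      (alive_snoc w true).mpr ⟨hw, by rw [if_pos rfl]; omega⟩
    rw [if_pos ht, wt_snoc, if_pos rfl, if_pos hw]
    by_cases h0 : walkW (extW w) m = 0
    · have hf : ¬ (Fin.snoc w false ∈ aliveSet (m+1)) := by
        rw [alive_snoc]
        rintro ⟨-, hc⟩
        rw [if_neg (by simp)] at hc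
        omega
      rw [if_neg hf, if_neg (fun hc => hc.2 h0)]
      ring
    · have hf : Fin.snoc w false ∈ aliveSet (m+1) :=
        (alive_snoc w false).mpr ⟨hw, by rw [if_neg (by simp)]; omega⟩
      rw [if_pos hf, wt_snoc, if_neg (by simp), if_pos ⟨hw, h0⟩]
      ring
  · have h1 : ¬ (Fin.snoc w true ∈ aliveSet (m+1)) := by rw [alive_snoc]; tauto
    have h2 : ¬ (Fin.snoc w false ∈ aliveSet (m+1)) := by rw [alive_snoc]; tauto
    rw [if_neg h1, if_neg h2, if_neg hw, if_neg (fun hc => hw hc.1)]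

lemma AA_succ (q p : ℝ) (m : ℕ) :
    AA q p (m+1) = q * AA q p m + p * EE q p m := by
  rw [AA, sum_alive_eq, sum_succ_fn,
    Finset.sum_congr rfl (fun w _ => point_R1 q p w), Finset.sum_add_distrib]
  congr 1
  · rw [AA, sum_alive_eq, Finset.mul_sum]
    exact Finset.sum_congr rfl (fun w _ => by
      by_cases hw : w ∈ aliveSet m <;> simp [hw])
  · rw [EE, sum_alive_filter_eq, Finset.mul_sum]
    exact Finset.sum_congr rfl (fun w _ => by
      by_cases hw : w ∈ aliveSet m ∧ ¬ walkW (extW w) m = 0 <;> simp [hw])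

end

noncomputable section

lemma point_R2 (q p : ℝ) {m : ℕ} (w : Fin m → Bool) :
    (∑ b : Bool, if Fin.snoc w b ∈ aliveSet (m+1)
        then wt q p (Fin.snoc w b)
          * ((walkW (extW (Fin.snoc w b : Fin (m+1) → Bool)) (m+1) : ℤ) : ℝ) else 0)
    = (if w ∈ aliveSet m
        then q * (wt q p w * (((walkW (extW w) m : ℤ) : ℝ) + 1)) else 0)
      + (if w ∈ aliveSet m ∧ ¬ walkW (extW w) m = 0
        then p * (wt q p w * (((walkW (extW w) m : ℤ) : ℝ) - 1)) else 0) := by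
  rw [Fintype.sum_bool]
  by_cases hw : w ∈ aliveSet m
  · have hW : 0 ≤ walkW (extW w) m :=
      walkW_nonneg (fun j hj => mem_aliveSet.mp hw j hj)
    have ht : Fin.snoc w true ∈ aliveSet (m+1) :=
      (alive_snoc w true).mpr ⟨hw, by rw [if_pos rfl]; omega⟩
    rw [if_pos ht, wt_snoc, walk_snoc_succ, if_pos rfl, if_pos rfl, if_pos hw]
    by_cases h0 : walkW (extW w) m = 0
    · have hf : ¬ (Fin.snoc w false ∈ aliveSet (m+1)) := by
        rw [alive_snoc]
        rintro ⟨-, hc⟩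
        rw [if_neg (by simp)] at hc
        omega
      rw [if_neg hf, if_neg (fun hc => hc.2 h0)]
      push_cast
      ring
    · have hf : Fin.snoc w false ∈ aliveSet (m+1) :=
        (alive_snoc w false).mpr ⟨hw, by rw [if_neg (by simp)]; omega⟩
      rw [if_pos hf, wt_snoc, walk_snoc_succ, if_neg (by simp), if_neg (by simp),
        if_pos ⟨hw, h0⟩]
      push_cast
      ring
  · have h1 : ¬ (Fin.snoc w true ∈ aliveSet (m+1)) := by rw [alive_snoc]; tauto
    have h2 : ¬ (Fin.snoc w false ∈ aliveSet (m+1)) := by rw [alive_snoc]; tauto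
    rw [if_neg h1, if_neg h2, if_neg hw, if_neg (fun hc => hw hc.1)]

lemma CC_succ (q p : ℝ) (m : ℕ) :
    CC q p (m+1) = q * (CC q p m + AA q p m) + p * (CC q p m - EE q p m) := by
  have e1 : q * (CC q p m + AA q p m)
      = ∑ w : Fin m → Bool, if w ∈ aliveSet m
          then q * (wt q p w * (((walkW (extW w) m : ℤ) : ℝ) + 1)) else 0 := by
    rw [CC, AA, sum_alive_eq, sum_alive_eq, ← Finset.sum_add_distrib, Finset.mul_sum]
    apply Finset.sum_congr rfl
    intro w _
    by_cases hw : w ∈ aliveSet m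
    · simp only [hw, if_true]; ring
    · simp [hw]
  have e2 : p * (CC q p m - EE q p m)
      = ∑ w : Fin m → Bool, if w ∈ aliveSet m ∧ ¬ walkW (extW w) m = 0
          then p * (wt q p w * (((walkW (extW w) m : ℤ) : ℝ) - 1)) else 0 := by
    rw [CC_eq_CE, EE, sum_alive_filter_eq, sum_alive_filter_eq,
      ← Finset.sum_sub_distrib, Finset.mul_sum]
    apply Finset.sum_congr rfl
    intro w _
    by_cases hw : w ∈ aliveSet m ∧ ¬ walkW (extW w) m = 0
    · rw [if_pos hw, if_pos hw, if_pos hw]; ring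
    · rw [if_neg hw, if_neg hw, if_neg hw]; ring
  rw [CC, sum_alive_eq, sum_succ_fn,
    Finset.sum_congr rfl (fun w _ => point_R2 q p w), Finset.sum_add_distrib, e1, e2]

end

noncomputable section
open Filter Topology

variable {q p : ℝ}

lemma wt_nonneg (hq : 0 ≤ q) (hp : 0 ≤ p) {m : ℕ} (w : Fin m → Bool) :
    0 ≤ wt q p w :=
  Finset.prod_nonneg fun i _ => by by_cases h : w i <;> simp [h, hq, hp]

lemma AA_nonneg (hq : 0 ≤ q) (hp : 0 ≤ p) (m : ℕ) : 0 ≤ AA q p m :=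
  Finset.sum_nonneg fun w _ => wt_nonneg hq hp w

lemma DD_nonneg (hq : 0 ≤ q) (hp : 0 ≤ p) (m : ℕ) : 0 ≤ DD q p m :=
  Finset.sum_nonneg fun w _ => wt_nonneg hq hp w

lemma EE_nonneg (hq : 0 ≤ q) (hp : 0 ≤ p) (m : ℕ) : 0 ≤ EE q p m :=
  Finset.sum_nonneg fun w _ => wt_nonneg hq hp w

lemma CC_nonneg (hq : 0 ≤ q) (hp : 0 ≤ p) (m : ℕ) : 0 ≤ CC q p m :=
  Finset.sum_nonneg fun w hw => by
    have hW : 0 ≤ walkW (extW w) m :=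
      walkW_nonneg (fun j hj => mem_aliveSet.mp hw j hj)
    have : (0:ℝ) ≤ ((walkW (extW w) m : ℤ) : ℝ) := by exact_mod_cast hW
    exact mul_nonneg (wt_nonneg hq hp w) this

lemma CC_le (hq : 0 ≤ q) (hp : 0 ≤ p) (m : ℕ) : CC q p m ≤ m * AA q p m := by
  rw [AA, Finset.mul_sum]
  apply Finset.sum_le_sum
  intro w _
  rw [mul_comm (m:ℝ)]
  apply mul_le_mul_of_nonneg_left _ (wt_nonneg hq hp w)
  exact_mod_cast walkW_le (extW w) m

lemma AA_zero : AA q p 0 = 1 := by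
  have h : aliveSet 0 = Finset.univ := by
    apply Finset.eq_univ_of_forall
    intro w
    rw [mem_aliveSet]
    intro k hk
    interval_cases k
    rw [walkW_zero]
    decide
  rw [AA, h]
  rw [Finset.sum_eq_single_of_mem (fun _ => false) (Finset.mem_univ _)]
  · exact Finset.prod_of_isEmpty _
  · intro w _ hne
    exact absurd (funext fun i => absurd i.2 (by omega)) hne

lemma CC_zero : CC q p 0 = 0 :=
  Finset.sum_eq_zero fun w _ => by rw [walkW_zero]; simp

lemma wt_eq_pow {m : ℕ} (w : Fin m → Bool) :
    wt q p w = q ^ ((Finset.range m).filter fun i => extW w i = true).card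
      * p ^ ((Finset.range m).filter fun i => extW w i = false).card := by
  have h1 : wt q p w = ∏ i ∈ Finset.range m, (if extW w i then q else p) := by
    rw [wt, ← Fin.prod_univ_eq_prod_range (fun i => if extW w i then q else p) m]
    apply Finset.prod_congr rfl
    intro i _
    rw [extW_eq w i.1 i.2]
  have e : (Finset.range m).filter (fun x => ¬ extW w x = true)
      = (Finset.range m).filter (fun i => extW w i = false) :=
    Finset.filter_congr (by intro i _; simp [Bool.not_eq_true])
  rw [h1, Finset.prod_ite, Finset.prod_const, Finset.prod_const, e]

lemma card_filter_walk {m : ℕ} (w : Fin m → Bool) :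
    walkW (extW w) m
      = (((Finset.range m).filter fun i => extW w i = true).card : ℤ)
        - (((Finset.range m).filter fun i => extW w i = false).card : ℤ) := rfl

lemma card_filter_add {m : ℕ} (w : Fin m → Bool) :
    ((Finset.range m).filter fun i => extW w i = true).card
      + ((Finset.range m).filter fun i => extW w i = false).card = m := by
  have h : ((Finset.range m).filter fun i => extW w i = false)
      = ((Finset.range m).filter fun i => ¬ (extW w i = true)) := by
    apply Finset.filter_congr
    intro i _
    simp [Bool.not_eq_true]
  rw [h, Finset.card_filter_add_card_filter_not, Finset.card_range]

lemma wt_le_of_alive (hq0 : 0 ≤ q) (hp0 : 0 ≤ p) (hqp : q ≤ p) {j : ℕ}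
    {w : Fin (2*j) → Bool} (hw : w ∈ aliveSet (2*j)) :
    wt q p w ≤ (q * p) ^ j := by
  set a := ((Finset.range (2*j)).filter fun i => extW w i = true).card with ha
  set b := ((Finset.range (2*j)).filter fun i => extW w i = false).card with hb
  have hab : a + b = 2*j := card_filter_add w
  have hW : 0 ≤ walkW (extW w) (2*j) :=
    walkW_nonneg (fun k hk => mem_aliveSet.mp hw k hk)
  rw [card_filter_walk] at hW
  have hba : b ≤ j := by omega
  have haj : a = j + (j - b) := by omega
  have hjb : j = b + (j - b) := by omega
  rw [wt_eq_pow, ← ha, ← hb, mul_pow, haj]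
  calc q ^ (j + (j - b)) * p ^ b = (q ^ j * p ^ b) * q ^ (j - b) := by ring
    _ ≤ (q ^ j * p ^ b) * p ^ (j - b) := by
        apply mul_le_mul_of_nonneg_left (pow_le_pow_left₀ hq0 hqp _)
        exact mul_nonneg (pow_nonneg hq0 _) (pow_nonneg hp0 _)
    _ = q ^ j * p ^ j := by rw [mul_assoc, ← pow_add, ← hjb]

lemma AA_even_le (hq0 : 0 ≤ q) (hp0 : 0 ≤ p) (hqp : q ≤ p) (j : ℕ) :
    AA q p (2*j) ≤ (4 * q * p) ^ j := by
  have h1 : AA q p (2*j) ≤ (aliveSet (2*j)).card • ((q*p)^j) :=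
    Finset.sum_le_card_nsmul _ _ _ (fun w hw => wt_le_of_alive hq0 hp0 hqp hw)
  have h2 : (aliveSet (2*j)).card ≤ 2 ^ (2*j) := by
    calc (aliveSet (2*j)).card ≤ Fintype.card (Fin (2*j) → Bool) := Finset.card_le_univ _
      _ = 2 ^ (2*j) := by simp [Fintype.card_fun]
  calc AA q p (2*j) ≤ (aliveSet (2*j)).card • ((q*p)^j) := h1
    _ ≤ (2 ^ (2*j) : ℕ) • ((q*p)^j) := by
        apply nsmul_le_nsmul_left (pow_nonneg (mul_nonneg hq0 hp0) _) h2
    _ = (4 * q * p) ^ j := by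
        rw [nsmul_eq_mul]
        push_cast
        rw [show (4:ℝ) * q * p = 4 * (q*p) by ring, pow_mul, ← mul_pow]
        norm_num

lemma DD_odd (k : ℕ) : DD q p (2*k+1) = 0 := by
  rw [DD, Finset.filter_false_of_mem, Finset.sum_empty]
  intro w _ h0
  have := walkW_parity (extW w) (2*k+1)
  rw [h0] at this
  rcases this with ⟨c, hc⟩
  omega

end

noncomputable section
open Filter Topology

variable {q p : ℝ}

lemma keyS (hpq : q + p = 1) (M : ℕ) :
    (p - q) * (∑ m ∈ Finset.range M, AA q p m) = 1 - AA q p M - CC q p M := by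
  induction M with
  | zero => simp [AA_zero, CC_zero]
  | succ M ih =>
    rw [Finset.sum_range_succ, AA_succ, CC_succ]
    linear_combination ih + (AA q p M + CC q p M) * hpq

lemma AA_even_succ (hpq : q + p = 1) (k : ℕ) :
    AA q p (2*k+1+1) = AA q p (2*k+1) := by
  have h := DD_add_EE q p (2*k+1)
  rw [DD_odd] at h
  rw [AA_succ, show EE q p (2*k+1) = AA q p (2*k+1) by linarith]
  linear_combination AA q p (2*k+1) * hpq

lemma keyS2 (hpq : q + p = 1) (K : ℕ) :
    2 * (∑ k ∈ Finset.range K, AA q p (2*k))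
      = (∑ m ∈ Finset.range (2*K), AA q p m) + 1 - AA q p (2*K) := by
  induction K with
  | zero => simp [AA_zero]
  | succ K ih =>
    rw [Finset.sum_range_succ, show 2*(K+1) = 2*K+1+1 by ring,
      Finset.sum_range_succ, Finset.sum_range_succ, AA_even_succ hpq]
    linarith

section limits
variable (hq0 : 0 < q) (hq : q < 1/2) (hp : p = 1 - q)
include hq0 hq hp

lemma hp0 : 0 < p := by rw [hp]; linarith
lemma hqp : q ≤ p := by rw [hp]; linarith
lemma hpq_sum : q + p = 1 := by rw [hp]; ring
lemma hd : 0 < p - q := by rw [hp]; linarith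
lemma hr1 : 4 * q * p < 1 := by rw [hp]; nlinarith [sq_nonneg (1 - 2*q)]

lemma tendsto_AA_even : Tendsto (fun j => AA q p (2*j)) atTop (𝓝 0) := by
  have hr0 : 0 ≤ 4 * q * p := by
    have := hp0 hq0 hq hp
    positivity
  apply squeeze_zero (fun j => AA_nonneg hq0.le (hp0 hq0 hq hp).le _)
    (fun j => AA_even_le hq0.le (hp0 hq0 hq hp).le (hqp hq0 hq hp) j)
  exact tendsto_pow_atTop_nhds_zero_of_lt_one hr0 (hr1 hq0 hq hp)

lemma tendsto_CC_even : Tendsto (fun j => CC q p (2*j)) atTop (𝓝 0) := by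
  have hp0' := hp0 hq0 hq hp
  have hr0 : 0 ≤ 4 * q * p := by positivity
  have hg : Tendsto (fun j : ℕ => 2 * ((j:ℝ) * (4*q*p)^j)) atTop (𝓝 0) := by
    have hs : Summable (fun j : ℕ => (j:ℝ)^1 * (4*q*p)^j) :=
      summable_pow_mul_geometric_of_norm_lt_one 1
        (by rw [Real.norm_eq_abs, abs_of_nonneg hr0]; exact hr1 hq0 hq hp)
    have := hs.tendsto_atTop_zero.const_mul (2:ℝ)
    simpa [pow_one] using this
  apply squeeze_zero (fun j => CC_nonneg hq0.le hp0'.le _) _ hg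
  intro j
  calc CC q p (2*j) ≤ (2*j : ℕ) * AA q p (2*j) := CC_le hq0.le hp0'.le _
    _ ≤ (2*j : ℕ) * (4*q*p)^j := by
        apply mul_le_mul_of_nonneg_left
          (AA_even_le hq0.le hp0'.le (hqp hq0 hq hp) j) (by positivity)
    _ = 2 * ((j:ℝ) * (4*q*p)^j) := by push_cast; ring

lemma hasSum_AA_even : HasSum (fun k => AA q p (2*k)) (p/(p-q)) := by
  have hp0' := hp0 hq0 hq hp
  have hd' := hd hq0 hq hp
  have hpq := hpq_sum hq0 hq hp
  rw [hasSum_iff_tendsto_nat_of_nonneg (fun k => AA_nonneg hq0.le hp0'.le _)]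
  have h2 : ∀ K : ℕ, (∑ k ∈ Finset.range K, AA q p (2*k))
      = ((1 - AA q p (2*K) - CC q p (2*K))/(p-q) + 1 - AA q p (2*K))/2 := by
    intro K
    have e1 := keyS hpq (2*K)
    have e2 := keyS2 hpq K
    have e3 : (∑ m ∈ Finset.range (2*K), AA q p m)
        = (1 - AA q p (2*K) - CC q p (2*K))/(p-q) := by
      rw [eq_div_iff (by linarith : p - q ≠ 0)]
      linarith
    rw [e3] at e2
    linarith
  have hTA := tendsto_AA_even hq0 hq hp
  have hTC := tendsto_CC_even hq0 hq hp
  have hT : Tendsto (fun K : ℕ =>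
      ((1 - AA q p (2*K) - CC q p (2*K))/(p-q) + 1 - AA q p (2*K))/2) atTop
      (𝓝 (((1 - 0 - 0)/(p-q) + 1 - 0)/2)) := by
    apply Filter.Tendsto.div_const
    apply Tendsto.sub _ hTA
    apply Tendsto.add_const
    apply Filter.Tendsto.div_const
    exact (tendsto_const_nhds.sub hTA).sub hTC
  have hval : ((1 - 0 - 0)/(p-q) + 1 - 0)/2 = p/(p-q) := by
    field_simp
    linear_combination -hpq
  rw [hval] at hT
  exact (Filter.tendsto_congr fun K => h2 K).mpr hT

end limits
end

noncomputable section measure_part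
open Filter Topology

def cyl {m : ℕ} (w : Fin m → Bool) : Set (ℕ → Bool) := {ω | ∀ i : Fin m, ω i = w i}

lemma measurableSet_cyl {m : ℕ} (w : Fin m → Bool) : MeasurableSet (cyl w) := by
  have h : cyl w = ⋂ i : Fin m, (fun ω : ℕ → Bool => ω (i:ℕ)) ⁻¹' {w i} := by
    ext ω; simp [cyl, Set.mem_iInter]
  rw [h]
  exact MeasurableSet.iInter fun i =>
    (measurable_pi_apply (i:ℕ)) (measurableSet_singleton _)

lemma disjoint_cyl {m : ℕ} {w w' : Fin m → Bool} (h : w ≠ w') :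
    Disjoint (cyl w) (cyl w') := by
  rw [Set.disjoint_left]
  intro ω hw hw'
  exact h (funext fun i => (hw i).symm.trans (hw' i))

lemma walk_eq_of_mem_cyl {m : ℕ} {w : Fin m → Bool} {ω : ℕ → Bool}
    (hω : ω ∈ cyl w) {k : ℕ} (hk : k ≤ m) : walkW ω k = walkW (extW w) k :=
  walkW_congr fun i hi => by
    rw [extW_eq w i (lt_of_lt_of_le hi hk)]
    exact hω ⟨i, lt_of_lt_of_le hi hk⟩

def Egt (m : ℕ) : Set (ℕ → Bool) := {ω | ∀ k ≤ m, walkW ω k ≠ -1}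

lemma Egt_eq (m : ℕ) : Egt m = ⋃ w ∈ aliveSet m, cyl w := by
  ext ω
  simp only [Egt, Set.mem_setOf_eq, Set.mem_iUnion]
  constructor
  · intro h
    refine ⟨fun i => ω i, ?_, fun i => rfl⟩
    rw [mem_aliveSet]
    intro k hk
    have : walkW ω k = walkW (extW fun i : Fin m => ω i) k :=
      walk_eq_of_mem_cyl (fun i => rfl) hk
    rw [← this]
    exact h k hk
  · rintro ⟨w, hw, hω⟩ k hk
    rw [walk_eq_of_mem_cyl hω hk]
    exact mem_aliveSet.mp hw k hk

lemma measurableSet_Egt (m : ℕ) : MeasurableSet (Egt m) := by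
  rw [Egt_eq]
  exact (aliveSet m).measurableSet_biUnion fun w _ => measurableSet_cyl w

lemma Egt_eq_tau (m : ℕ) : Egt m = {ω | (m : ℕ∞) < tauEF ω} := by
  ext ω
  rw [Egt, Set.mem_setOf_eq, Set.mem_setOf_eq, lt_tauEF_iff]

variable {q p : ℝ} {μ : Measure (ℕ → Bool)}

lemma mu_cyl (hq0 : 0 ≤ q) (hp0 : 0 ≤ p)
    (hμ : ∀ (n : ℕ) (w : Fin n → Bool),
      μ {ω | ∀ i : Fin n, ω i = w i} =
        ∏ i : Fin n, (if w i then ENNReal.ofReal q else ENNReal.ofReal p))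
    {m : ℕ} (w : Fin m → Bool) : μ (cyl w) = ENNReal.ofReal (wt q p w) := by
  rw [cyl, hμ m w, wt, ENNReal.ofReal_prod_of_nonneg
    (fun i _ => by by_cases h : w i <;> simp [h, hq0, hp0])]
  apply Finset.prod_congr rfl
  intro i _
  by_cases h : w i <;> simp [h]

lemma mu_Egt (hq0 : 0 ≤ q) (hp0 : 0 ≤ p)
    (hμ : ∀ (n : ℕ) (w : Fin n → Bool),
      μ {ω | ∀ i : Fin n, ω i = w i} =
        ∏ i : Fin n, (if w i then ENNReal.ofReal q else ENNReal.ofReal p))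
    (m : ℕ) : μ (Egt m) = ENNReal.ofReal (AA q p m) := by
  rw [Egt_eq, measure_biUnion_finset
    (fun w _ w' _ hne => disjoint_cyl hne) (fun w _ => measurableSet_cyl w)]
  rw [AA, ENNReal.ofReal_sum_of_nonneg (fun w _ => wt_nonneg hq0 hp0 w)]
  exact Finset.sum_congr rfl fun w _ => mu_cyl hq0 hp0 hμ w

end measure_part

/-- The Equal-Fork Stubborn Mining cycle: `τ` is almost surely finite and the cycle
length `L = (τ + 1) / 2` has expectation `E[L] = p / (p - q)`. -/
theorem tauEF_finite_and_expectation (q p : ℝ) (hq0 : 0 < q) (hq : q < 1 / 2)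
    (hp : p = 1 - q)
    (μ : Measure (ℕ → Bool)) [IsProbabilityMeasure μ]
    (hμ : ∀ (n : ℕ) (w : Fin n → Bool),
      μ {ω | ∀ i : Fin n, ω i = w i} =
        ∏ i : Fin n, (if w i then ENNReal.ofReal q else ENNReal.ofReal p)) :
    μ {ω | tauEF ω < ⊤} = 1 ∧
    ∫⁻ ω, ((tauEF ω : ℝ≥0∞) + 1) / 2 ∂μ = ENNReal.ofReal (p / (p - q)) := by
  have hq0' := hq0.le
  have hP0 := (hp0 hq0 hq hp).le
  have hd' := hd hq0 hq hp
  have hpq := hpq_sum hq0 hq hp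
  have hS : HasSum (fun k => AA q p (2*k)) (p/(p-q)) := hasSum_AA_even hq0 hq hp
  have hAe : Filter.Tendsto (fun j => AA q p (2*j)) Filter.atTop (nhds 0) :=
    tendsto_AA_even hq0 hq hp
  have hnullset : {ω : ℕ → Bool | ¬ tauEF ω < ⊤} = ⋂ m : ℕ, Egt m := by
    ext ω
    simp only [Set.mem_setOf_eq, Set.mem_iInter, not_lt, top_le_iff]
    constructor
    · intro h m
      rw [Egt_eq_tau, Set.mem_setOf_eq, h]
      exact WithTop.coe_lt_top m
    · intro h
      by_contra hne
      obtain ⟨n, hn0⟩ := WithTop.ne_top_iff_exists.mp hne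
      have hn : (n : ℕ∞) = tauEF ω := by exact_mod_cast hn0
      have h2 := h n
      rw [Egt_eq_tau, Set.mem_setOf_eq, ← hn] at h2
      exact lt_irrefl _ h2
  have hnull : μ {ω : ℕ → Bool | ¬ tauEF ω < ⊤} = 0 := by
    have hle : ∀ j : ℕ, μ {ω : ℕ → Bool | ¬ tauEF ω < ⊤}
        ≤ ENNReal.ofReal (AA q p (2*j)) := by
      intro j
      rw [← mu_Egt hq0' hP0 hμ (2*j)]
      apply measure_mono
      rw [hnullset]
      exact Set.iInter_subset _ _
    have htend : Filter.Tendsto (fun j => ENNReal.ofReal (AA q p (2*j)))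
        Filter.atTop (nhds 0) := by
      have h2 := ENNReal.tendsto_ofReal hAe
      rwa [ENNReal.ofReal_zero] at h2
    exact le_antisymm (ge_of_tendsto' htend hle) zero_le
  have hmeas_inter : MeasurableSet (⋂ m : ℕ, Egt m) :=
    MeasurableSet.iInter fun m => measurableSet_Egt m
  constructor
  · have hc : {ω : ℕ → Bool | tauEF ω < ⊤} = (⋂ m : ℕ, Egt m)ᶜ := by
      rw [← hnullset]
      ext ω
      simp [lt_top_iff_ne_top]
    rw [hc, prob_compl_eq_one_sub hmeas_inter, ← hnullset, hnull, tsub_zero]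
  · have hpt : ∀ ω : ℕ → Bool, ((tauEF ω : ℝ≥0∞) + 1) / 2
        = ∑' k : ℕ, (Egt (2*k)).indicator (fun _ => (1:ℝ≥0∞)) ω := by
      intro ω
      rcases eq_or_ne (tauEF ω) ⊤ with h | h
      · have hmem : ∀ k : ℕ, ω ∈ Egt (2*k) := by
          intro k
          rw [Egt_eq_tau, Set.mem_setOf_eq, h]
          exact WithTop.coe_lt_top _
        rw [tsum_congr (fun k => Set.indicator_of_mem (hmem k) _),
          ENNReal.tsum_const_eq_top_of_ne_zero one_ne_zero, h, ENat.toENNReal_top]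
        simp [ENNReal.top_div_of_ne_top, ENNReal.ofNat_ne_top]
      · obtain ⟨n, hn0⟩ := WithTop.ne_top_iff_exists.mp h
        have hn : (n : ℕ∞) = tauEF ω := by exact_mod_cast hn0
        obtain ⟨h1n, hwn⟩ := tauEF_eq_coe hn.symm
        obtain ⟨j, hj⟩ : ∃ j, n = 2*j + 1 := by
          have hpar := walkW_parity ω n
          rw [hwn] at hpar
          rcases hpar with ⟨c, hc⟩
          exact ⟨n / 2, by omega⟩
        have hmem : ∀ k : ℕ, ((Egt (2*k)).indicator (fun _ => (1:ℝ≥0∞)) ω)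
            = if k ≤ j then 1 else 0 := by
          intro k
          by_cases hk : k ≤ j
          · rw [if_pos hk, Set.indicator_of_mem]
            rw [Egt_eq_tau, Set.mem_setOf_eq, ← hn]
            exact Nat.cast_lt.mpr (by omega)
          · rw [if_neg hk, Set.indicator_of_notMem]
            rw [Egt_eq_tau, Set.mem_setOf_eq, ← hn]
            intro hc
            have hc2 : 2*k < n := Nat.cast_lt.mp hc
            omega
        rw [tsum_congr hmem,
          tsum_eq_sum (s := Finset.range (j+1))
            (fun k hk => if_neg (by simpa using hk)),
          Finset.sum_congr rfl
            (fun k hk => if_pos (by simpa [Nat.lt_succ_iff] using hk)),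
          Finset.sum_const, Finset.card_range, nsmul_eq_mul, mul_one, ← hn, hj]
        rw [eq_comm, ENNReal.eq_div_iff two_ne_zero ENNReal.ofNat_ne_top]
        push_cast
        ring
    rw [lintegral_congr hpt,
      lintegral_tsum (fun k =>
        (measurable_const.indicator (measurableSet_Egt (2*k))).aemeasurable)]
    have hval : ∀ k : ℕ, ∫⁻ ω, (Egt (2*k)).indicator (fun _ => (1:ℝ≥0∞)) ω ∂μ
        = ENNReal.ofReal (AA q p (2*k)) := by
      intro k
      rw [lintegral_indicator_const (measurableSet_Egt (2*k)), one_mul,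
        mu_Egt hq0' hP0 hμ]
    rw [tsum_congr hval,
      ← ENNReal.ofReal_tsum_of_nonneg (fun k => AA_nonneg hq0' hP0 _) hS.summable,
      hS.tsum_eq]
end
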